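/- For every τ ≥ 0 and every matrix Y ∈ ℝ^{n₁×n₂}, the singular value shrinkage operator satisfies D_τ(Y) = argmin over X ∈ ℝ^{n₁×n₂} of (1/2)‖X − Y‖_F² + τ‖X‖_*; that is, D_τ(Y) is the unique minimizer of this functional. -/

import Mathlib

open Matrix Filter Topology

noncomputable def frob {n₁ n₂ : ℕ} (X : Matrix (Fin n₁) (Fin n₂) ℝ) : ℝ :=
  Real.sqrt (∑ i, ∑ j, (X i j) ^ 2)

noncomputable def mInner {n₁ n₂ : ℕ} (X Y : Matrix (Fin n₁) (Fin n₂) ℝ) : ℝ :=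
  ∑ i, ∑ j, X i j * Y i j

noncomputable def singVal {n₁ n₂ : ℕ} (X : Matrix (Fin n₁) (Fin n₂) ℝ) (j : Fin n₂) : ℝ :=
  Real.sqrt ((show (Xᵀ * X).IsHermitian by
    simpa using Matrix.isHermitian_conjTranspose_mul_self X).eigenvalues j)

noncomputable def nuclearNorm {n₁ n₂ : ℕ} (X : Matrix (Fin n₁) (Fin n₂) ℝ) : ℝ :=
  ∑ j, singVal X j

noncomputable def specNorm {n₁ n₂ : ℕ} (X : Matrix (Fin n₁) (Fin n₂) ℝ) : ℝ :=
  ⨆ j, singVal X j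

noncomputable def ftau {n₁ n₂ : ℕ} (τ : ℝ) (X : Matrix (Fin n₁) (Fin n₂) ℝ) : ℝ :=
  τ * nuclearNorm X + (1 / 2) * frob X ^ 2

def projSet {n₁ n₂ : ℕ} (Ω : Finset (Fin n₁ × Fin n₂)) (X : Matrix (Fin n₁) (Fin n₂) ℝ) :
    Matrix (Fin n₁) (Fin n₂) ℝ :=
  Matrix.of fun i j => if (i, j) ∈ Ω then X i j else 0

def IsSubgradAt {n₁ n₂ : ℕ} (f : Matrix (Fin n₁) (Fin n₂) ℝ → ℝ)
    (Z X₀ : Matrix (Fin n₁) (Fin n₂) ℝ) : Prop :=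
  ∀ X, f X₀ + mInner Z (X - X₀) ≤ f X

noncomputable def eNorm {m : ℕ} (v : Fin m → ℝ) : ℝ := Real.sqrt (∑ i, v i ^ 2)

noncomputable def eInner {m : ℕ} (v w : Fin m → ℝ) : ℝ := ∑ i, v i * w i

/-!
Write `d = (σ - τ)₊` and `W = Y - D_τ(Y) = U diag(σ - d) Vᵀ`. Since `0 ≤ σᵢ - dᵢ ≤ τ`, `W` has
operator norm at most `τ`, and `σᵢ - dᵢ = τ` wherever `dᵢ > 0`, so `⟨W, D_τ(Y)⟩ = τ ∑ dᵢ`,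
which is `τ ‖D_τ(Y)‖_*` because `V diag(d) Vᵀ` is the positive square root of `D_τ(Y)ᵀ D_τ(Y)`.
Expanding `⟨W, X⟩ = tr (Wᵀ X)` in an eigenbasis `(qⱼ)` of `Xᵀ X` and applying Cauchy–Schwarz to each
term `⟨W qⱼ, X qⱼ⟩` gives `⟨W, X⟩ ≤ τ ‖X‖_*`, so `W` is a subgradient of `τ ‖·‖_*` at `D_τ(Y)`.
The identity `‖X - Y‖² = ‖D - Y‖² - 2 ⟨Y - D, X - D⟩ + ‖X - D‖²` then yields
`F(X) ≥ F(D_τ(Y)) + ½ ‖X - D_τ(Y)‖_F²`, which is minimality and uniqueness at once.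
-/

namespace Matrix

section Isometry

variable {m k : Type*} [Fintype m] [Fintype k] [DecidableEq k]

lemma dotProduct_mulVec_self_of_transpose_mul_self_eq_one {U : Matrix m k ℝ} (hU : Uᵀ * U = 1)
    (z : k → ℝ) : (U *ᵥ z) ⬝ᵥ (U *ᵥ z) = z ⬝ᵥ z := by
  rw [dotProduct_mulVec, ← vecMul_transpose, vecMul_vecMul, hU, vecMul_one]

lemma transpose_mulVec_dotProduct_self_le {V : Matrix m k ℝ} (hV : Vᵀ * V = 1) (v : m → ℝ) :
    (Vᵀ *ᵥ v) ⬝ᵥ (Vᵀ *ᵥ v) ≤ v ⬝ᵥ v := by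
  set y := Vᵀ *ᵥ v
  have hcross : (V *ᵥ y) ⬝ᵥ v = y ⬝ᵥ y := by
    rw [← vecMul_transpose, ← dotProduct_mulVec]
  have hres := dotProduct_self_star_nonneg (v - V *ᵥ y)
  simp only [star_trivial, sub_dotProduct, dotProduct_sub, hcross, dotProduct_comm v (V *ᵥ y),
    dotProduct_mulVec_self_of_transpose_mul_self_eq_one hV] at hres
  linarith

variable {n : Type*} [Fintype n]

lemma svd_mulVec_dotProduct_self_le {U : Matrix m k ℝ} {V : Matrix n k ℝ} (hU : Uᵀ * U = 1)
    (hV : Vᵀ * V = 1) {w : k → ℝ} {τ : ℝ} (hw : ∀ i, |w i| ≤ τ) (v : n → ℝ) :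
    ((U * diagonal w * Vᵀ) *ᵥ v) ⬝ᵥ ((U * diagonal w * Vᵀ) *ᵥ v) ≤ τ ^ 2 * (v ⬝ᵥ v) := by
  rw [← mulVec_mulVec, ← mulVec_mulVec, dotProduct_mulVec_self_of_transpose_mul_self_eq_one hU]
  set y := Vᵀ *ᵥ v
  calc (diagonal w *ᵥ y) ⬝ᵥ (diagonal w *ᵥ y) ≤ τ ^ 2 * (y ⬝ᵥ y) := by
        simp only [mulVec_diagonal, dotProduct, Finset.mul_sum]
        refine Finset.sum_le_sum fun i _ => ?_
        have hwτ : w i ^ 2 ≤ τ ^ 2 := sq_le_sq.mpr ((hw i).trans (le_abs_self τ))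
        nlinarith [mul_self_nonneg (y i)]
    _ ≤ τ ^ 2 * (v ⬝ᵥ v) := by gcongr; exact transpose_mulVec_dotProduct_self_le hV v

end Isometry

lemma trace_eq_sum_dotProduct_mulVec {n ι : Type*} [Fintype n] [DecidableEq n] [Fintype ι]
    (A : Matrix n n ℝ) (b : OrthonormalBasis ι ℝ (EuclideanSpace ℝ n)) :
    trace A = ∑ j, ⇑(b j) ⬝ᵥ (A *ᵥ ⇑(b j)) := by
  -- `toEuclideanLin A` is `toLin' A` conjugated by the identification `EuclideanSpace ℝ n ≃ n → ℝ`
  calc trace A = LinearMap.trace ℝ _ (toEuclideanLin A) :=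
        A.trace_toLin'_eq.symm.trans
          (LinearMap.trace_conj' (toLin' A) (WithLp.linearEquiv 2 ℝ (n → ℝ)).symm).symm
    _ = _ := by
      rw [LinearMap.trace_eq_sum_inner _ b]
      simp [EuclideanSpace.inner_eq_star_dotProduct, dotProduct_comm]

open scoped MatrixOrder in
lemma PosSemidef.trace_sqrt {n : Type*} [Fintype n] [DecidableEq n] {A : Matrix n n ℝ}
    (hA : A.PosSemidef) : trace (CFC.sqrt A) = ∑ j, Real.sqrt (hA.1.eigenvalues j) := by
  rw [CFC.sqrt_eq_cfc, cfc_nnreal_eq_real _ A hA.nonneg, hA.1.cfc_eq]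
  simp only [IsHermitian.cfc, Unitary.conjStarAlgAut_apply]
  rw [trace_mul_cycle, Matrix.mem_unitaryGroup_iff'.mp hA.1.eigenvectorUnitary.2, Matrix.one_mul,
    trace_diagonal]
  simp [max_eq_left (hA.eigenvalues_nonneg _)]

end Matrix

lemma OrthonormalBasis.dotProduct_self_eq_one {n ι : Type*} [Fintype n] [Fintype ι]
    (b : OrthonormalBasis ι ℝ (EuclideanSpace ℝ n)) (j : ι) : ⇑(b j) ⬝ᵥ ⇑(b j) = 1 := by
  have h := b.inner_eq_one j
  rwa [EuclideanSpace.inner_eq_star_dotProduct, star_trivial] at h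

section Frobenius

variable {n₁ n₂ : ℕ}

lemma mInner_eq_trace (A B : Matrix (Fin n₁) (Fin n₂) ℝ) : mInner A B = trace (Aᵀ * B) := by
  simp only [mInner, trace, diag_apply, mul_apply, transpose_apply]
  exact Finset.sum_comm

lemma mInner_sub_right (W X D : Matrix (Fin n₁) (Fin n₂) ℝ) :
    mInner W (X - D) = mInner W X - mInner W D := by
  simp only [mInner, Matrix.sub_apply, mul_sub, Finset.sum_sub_distrib]

lemma frob_sq (A : Matrix (Fin n₁) (Fin n₂) ℝ) : frob A ^ 2 = mInner A A := by
  rw [frob, Real.sq_sqrt (by positivity)]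
  simp only [mInner, sq]

lemma frob_sq_eq_zero_iff {A : Matrix (Fin n₁) (Fin n₂) ℝ} : frob A ^ 2 = 0 ↔ A = 0 := by
  rw [frob_sq, mInner_eq_trace, ← conjTranspose_eq_transpose_of_trivial,
    trace_conjTranspose_mul_self_eq_zero_iff]

lemma frob_sub_sq_eq (X Y D : Matrix (Fin n₁) (Fin n₂) ℝ) :
    frob (X - Y) ^ 2 = frob (D - Y) ^ 2 - 2 * mInner (Y - D) (X - D) + frob (X - D) ^ 2 := by
  simp only [frob_sq, mInner, Matrix.sub_apply, Finset.mul_sum, ← Finset.sum_sub_distrib,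
    ← Finset.sum_add_distrib]
  exact Finset.sum_congr rfl fun i _ => Finset.sum_congr rfl fun j _ => by ring

lemma IsSubgradAt.add_half_frob_sq_le {g : Matrix (Fin n₁) (Fin n₂) ℝ → ℝ}
    {Y D : Matrix (Fin n₁) (Fin n₂) ℝ} (h : IsSubgradAt g (Y - D) D)
    (X : Matrix (Fin n₁) (Fin n₂) ℝ) :
    (1 / 2) * frob (D - Y) ^ 2 + g D + (1 / 2) * frob (X - D) ^ 2 ≤
      (1 / 2) * frob (X - Y) ^ 2 + g X := by
  rw [frob_sub_sq_eq X Y D]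
  linarith [h X]

end Frobenius

section NuclearNorm

open scoped MatrixOrder

variable {n₁ n₂ : ℕ}

lemma mInner_eq_sum_mulVec_dotProduct {ι : Type*} [Fintype ι] (W X : Matrix (Fin n₁) (Fin n₂) ℝ)
    (b : OrthonormalBasis ι ℝ (EuclideanSpace ℝ (Fin n₂))) :
    mInner W X = ∑ j, (W *ᵥ ⇑(b j)) ⬝ᵥ (X *ᵥ ⇑(b j)) := by
  rw [mInner_eq_trace, trace_eq_sum_dotProduct_mulVec _ b]
  simp only [← mulVec_mulVec, dotProduct_mulVec, vecMul_transpose]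

lemma mulVec_eigenvectorBasis_dotProduct_self (X : Matrix (Fin n₁) (Fin n₂) ℝ) (j : Fin n₂) :
    (X *ᵥ ⇑((isHermitian_conjTranspose_mul_self X).eigenvectorBasis j)) ⬝ᵥ
      (X *ᵥ ⇑((isHermitian_conjTranspose_mul_self X).eigenvectorBasis j)) =
      (isHermitian_conjTranspose_mul_self X).eigenvalues j := by
  set hA := isHermitian_conjTranspose_mul_self X
  rw [dotProduct_mulVec, ← vecMul_transpose, vecMul_vecMul, ← mulVec_transpose, transpose_mul,
    transpose_transpose, ← conjTranspose_eq_transpose_of_trivial, hA.mulVec_eigenvectorBasis j,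
    smul_dotProduct, OrthonormalBasis.dotProduct_self_eq_one, smul_eq_mul, mul_one]

lemma singVal_eq_sqrt (X : Matrix (Fin n₁) (Fin n₂) ℝ) (j : Fin n₂) :
    singVal X j =
      Real.sqrt ((X *ᵥ ⇑((isHermitian_conjTranspose_mul_self X).eigenvectorBasis j)) ⬝ᵥ
        (X *ᵥ ⇑((isHermitian_conjTranspose_mul_self X).eigenvectorBasis j))) := by
  rw [mulVec_eigenvectorBasis_dotProduct_self]
  -- `singVal` is phrased with `Xᵀ * X`, which is `Xᴴ * X` once `star` on `ℝ` is unfolded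
  rfl

lemma nuclearNorm_eq_trace_sqrt (X : Matrix (Fin n₁) (Fin n₂) ℝ) :
    nuclearNorm X = trace (CFC.sqrt (Xᴴ * X)) := by
  rw [(posSemidef_conjTranspose_mul_self X).trace_sqrt]
  rfl

lemma mInner_le_mul_nuclearNorm {τ : ℝ} (hτ : 0 ≤ τ) {W : Matrix (Fin n₁) (Fin n₂) ℝ}
    (hW : ∀ v, (W *ᵥ v) ⬝ᵥ (W *ᵥ v) ≤ τ ^ 2 * (v ⬝ᵥ v)) (X : Matrix (Fin n₁) (Fin n₂) ℝ) :
    mInner W X ≤ τ * nuclearNorm X := by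
  set b := (isHermitian_conjTranspose_mul_self X).eigenvectorBasis
  rw [mInner_eq_sum_mulVec_dotProduct W X b, nuclearNorm, Finset.mul_sum]
  refine Finset.sum_le_sum fun j _ => ?_
  have hWb : Real.sqrt ((W *ᵥ ⇑(b j)) ⬝ᵥ (W *ᵥ ⇑(b j))) ≤ τ := by
    refine Real.sqrt_le_iff.mpr ⟨hτ, ?_⟩
    simpa [b.dotProduct_self_eq_one] using hW (b j)
  calc (W *ᵥ ⇑(b j)) ⬝ᵥ (X *ᵥ ⇑(b j))
      ≤ Real.sqrt ((W *ᵥ ⇑(b j)) ⬝ᵥ (W *ᵥ ⇑(b j))) *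
          Real.sqrt ((X *ᵥ ⇑(b j)) ⬝ᵥ (X *ᵥ ⇑(b j))) := by
        simpa [dotProduct, sq] using Real.sum_mul_le_sqrt_mul_sqrt Finset.univ
          (fun i => (W *ᵥ ⇑(b j)) i) (fun i => (X *ᵥ ⇑(b j)) i)
    _ ≤ τ * singVal X j := by
        rw [singVal_eq_sqrt]
        exact mul_le_mul_of_nonneg_right hWb (Real.sqrt_nonneg _)

section SVD

variable {k : Type*} [Fintype k] [DecidableEq k] {U : Matrix (Fin n₁) k ℝ}
  {V : Matrix (Fin n₂) k ℝ}

lemma svd_transpose_mul_svd (hU : Uᵀ * U = 1) (a b : k → ℝ) :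
    (U * diagonal a * Vᵀ)ᵀ * (U * diagonal b * Vᵀ) = V * diagonal (a * b) * Vᵀ := by
  simp only [transpose_mul, transpose_transpose, diagonal_transpose, Matrix.mul_assoc]
  rw [← Matrix.mul_assoc Uᵀ U, hU, Matrix.one_mul, ← Matrix.mul_assoc (diagonal a),
    diagonal_mul_diagonal]
  rfl

lemma trace_mul_diagonal_mul_transpose (hV : Vᵀ * V = 1) (a : k → ℝ) :
    trace (V * diagonal a * Vᵀ) = ∑ i, a i := by
  rw [trace_mul_cycle, hV, Matrix.one_mul, trace_diagonal]

lemma mInner_svd (hU : Uᵀ * U = 1) (hV : Vᵀ * V = 1) (a b : k → ℝ) :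
    mInner (U * diagonal a * Vᵀ) (U * diagonal b * Vᵀ) = ∑ i, a i * b i := by
  rw [mInner_eq_trace, svd_transpose_mul_svd hU, trace_mul_diagonal_mul_transpose hV]
  rfl

lemma nuclearNorm_svd (hU : Uᵀ * U = 1) (hV : Vᵀ * V = 1) {d : k → ℝ} (hd : ∀ i, 0 ≤ d i) :
    nuclearNorm (U * diagonal d * Vᵀ) = ∑ i, d i := by
  have hS : (V * diagonal d * Vᵀ).PosSemidef := by
    simpa [conjTranspose_eq_transpose_of_trivial] using
      (PosSemidef.diagonal hd).mul_mul_conjTranspose_same V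
  have hSS : (V * diagonal d * Vᵀ) * (V * diagonal d * Vᵀ) =
      (U * diagonal d * Vᵀ)ᴴ * (U * diagonal d * Vᵀ) := by
    nth_rewrite 1 [← hS.1.eq]
    rw [conjTranspose_eq_transpose_of_trivial, conjTranspose_eq_transpose_of_trivial,
      svd_transpose_mul_svd hV, svd_transpose_mul_svd hU]
  rw [nuclearNorm_eq_trace_sqrt, CFC.sqrt_unique hSS hS.nonneg,
    trace_mul_diagonal_mul_transpose hV]

end SVD

end NuclearNorm

lemma isSubgradAt_mul_nuclearNorm {n₁ n₂ : ℕ} {τ : ℝ} (hτ : 0 ≤ τ)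
    {W D : Matrix (Fin n₁) (Fin n₂) ℝ} (hW : ∀ v, (W *ᵥ v) ⬝ᵥ (W *ᵥ v) ≤ τ ^ 2 * (v ⬝ᵥ v))
    (hWD : mInner W D = τ * nuclearNorm D) :
    IsSubgradAt (fun X => τ * nuclearNorm X) W D := by
  intro X
  rw [mInner_sub_right]
  linarith [mInner_le_mul_nuclearNorm hτ hW X]

/-- For every `τ ≥ 0` and matrix `Y`, the singular value shrinkage operator
`D_τ(Y) = U diag((σᵢ - τ)₊) Vᵀ` (for any reduced SVD `Y = U diag(σ) Vᵀ`) is the unique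
minimizer of `X ↦ (1/2)‖X - Y‖_F² + τ‖X‖_*`. -/
theorem svt_shrinkage_is_prox (n₁ n₂ r : ℕ) (τ : ℝ) (hτ : 0 ≤ τ)
    (Y : Matrix (Fin n₁) (Fin n₂) ℝ)
    (U : Matrix (Fin n₁) (Fin r) ℝ) (V : Matrix (Fin n₂) (Fin r) ℝ)
    (σ : Fin r → ℝ) (hσ : ∀ i, 0 < σ i)
    (hU : Uᵀ * U = 1) (hV : Vᵀ * V = 1)
    (hY : Y = U * Matrix.diagonal σ * Vᵀ)
    (D : Matrix (Fin n₁) (Fin n₂) ℝ)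
    (hD : D = U * Matrix.diagonal (fun i => max (σ i - τ) 0) * Vᵀ) :
    (∀ X : Matrix (Fin n₁) (Fin n₂) ℝ,
        (1 / 2) * frob (D - Y) ^ 2 + τ * nuclearNorm D ≤
          (1 / 2) * frob (X - Y) ^ 2 + τ * nuclearNorm X) ∧
    (∀ X : Matrix (Fin n₁) (Fin n₂) ℝ,
        (1 / 2) * frob (X - Y) ^ 2 + τ * nuclearNorm X =
          (1 / 2) * frob (D - Y) ^ 2 + τ * nuclearNorm D → X = D) := by
  set d : Fin r → ℝ := fun i => max (σ i - τ) 0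
  have hYD : Y - D = U * diagonal (σ - d) * Vᵀ := by
    rw [hY, hD, ← Matrix.sub_mul, ← Matrix.mul_sub]
    exact congrArg (U * · * Vᵀ) (diagonal_sub σ d)
  have hw : ∀ i, |(σ - d) i| ≤ τ := fun i => by
    rcases le_total (σ i - τ) 0 with h | h
    · simp only [Pi.sub_apply, d, max_eq_right h, sub_zero, abs_of_pos (hσ i)]
      linarith
    · simp only [Pi.sub_apply, d, max_eq_left h, sub_sub_cancel, abs_of_nonneg hτ, le_refl]
  have hWD : mInner (Y - D) D = τ * nuclearNorm D := by
    rw [hYD, hD, mInner_svd hU hV, nuclearNorm_svd hU hV (fun i => le_max_right _ _),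
      Finset.mul_sum]
    refine Finset.sum_congr rfl fun i _ => ?_
    rcases le_total (σ i - τ) 0 with h | h <;> simp [d, h]
  have hgrowth := (isSubgradAt_mul_nuclearNorm hτ
    (hYD ▸ svd_mulVec_dotProduct_self_le hU hV hw) hWD).add_half_frob_sq_le
  refine ⟨fun X => by linarith [hgrowth X, sq_nonneg (frob (X - D))], fun X hX => ?_⟩
  have hXD : frob (X - D) ^ 2 = 0 := by linarith [hgrowth X, sq_nonneg (frob (X - D))]
  exact sub_eq_zero.mp (frob_sq_eq_zero_iff.mp hXD)
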